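/- arXiv:2603.14359 — 3 statements merged into one kernel-verified Lean document; each statement's English description precedes it below -/
import Mathlib

section
/- Let G be a group and μ a finitely additive, conjugation-invariant probability measure on G \ {1}. Define N = {g ∈ G : μ(C_G(g) \ {1}) = 1} ∪ {1}, where C_G(g) is the centralizer of g in G. Then N is a normal subgroup of G. -/
open Filter Topology

/-- A finitely additive conjugation-invariant probability measure (mean)
on `G \ {1}`. -/
structure ConjInvMean (G : Type*) [Group G] where
  μ : Set G → ℝ
  nonneg : ∀ A : Set G, A ⊆ {g : G | g ≠ 1} → 0 ≤ μ A
  total : μ {g : G | g ≠ 1} = 1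
  additive : ∀ A B : Set G, A ⊆ {g : G | g ≠ 1} → B ⊆ {g : G | g ≠ 1} →
    Disjoint A B → μ (A ∪ B) = μ A + μ B
  conj_inv : ∀ (g : G) (A : Set G), A ⊆ {h : G | h ≠ 1} →
    μ ((fun x => g * x * g⁻¹) '' A) = μ A

/-- The set `N = {g : μ(C_G(g) \ {1}) = 1} ∪ {1}`. -/
def Nset {G : Type*} [Group G] (m : ConjInvMean G) : Set G :=
  {g : G | m.μ ((Subgroup.centralizer {g} : Set G) \ {1}) = 1} ∪ {1}

/-!
Each of the three closure properties of `N` comes from an inclusion of punctured centralizers: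
`C(a) ∩ C(b) ⊆ C(ab)`, `C(a) ⊆ C(a⁻¹)` and `k C(a) k⁻¹ ⊆ C(kak⁻¹)`. Sets of measure one are
closed under finite intersections and supersets, and conjugation preserves measure, so each
inclusion transports `μ = 1` from the hypotheses to the conclusion. The identity needs no
special treatment, since `C(1) \ {1}` is the whole space and has measure one.
-/

theorem Set.sdiff_singleton_subset_ne {α : Type*} {S : Set α} {a : α} :
    S \ {a} ⊆ {x | x ≠ a} :=
  fun _ hx => hx.2

namespace Subgroup

variable {G : Type*} [Group G]

theorem centralizer_singleton_inf_le_mul (a b : G) :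
    centralizer {a} ⊓ centralizer {b} ≤ centralizer {a * b} := by
  intro x hx
  obtain ⟨ha, hb⟩ := mem_inf.mp hx
  rw [mem_centralizer_singleton_iff] at ha hb ⊢
  exact Commute.mul_right ha hb

theorem centralizer_singleton_le_inv (a : G) : centralizer {a} ≤ centralizer {a⁻¹} := by
  intro x hx
  rw [mem_centralizer_singleton_iff] at hx ⊢
  exact Commute.inv_right hx

theorem conj_mem_centralizer_singleton {a x : G} (k : G) (hx : x ∈ centralizer {a}) :
    k * x * k⁻¹ ∈ centralizer {k * a * k⁻¹} := by
  simpa using map_centralizer_le_centralizer_image {a} (MulAut.conj k).toMonoidHom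
    (mem_map_of_mem _ hx)

theorem centralizer_singleton_one : centralizer ({1} : Set G) = ⊤ :=
  eq_top_iff.mpr fun x _ => by rw [mem_centralizer_singleton_iff, one_mul, mul_one]

end Subgroup

namespace ConjInvMean

open Subgroup

variable {G : Type*} [Group G] (m : ConjInvMean G)

theorem μ_mono {A B : Set G} (hB : B ⊆ {g | g ≠ 1}) (hAB : A ⊆ B) : m.μ A ≤ m.μ B := by
  have hsplit := m.additive A (B \ A) (hAB.trans hB) (Set.sdiff_subset.trans hB)
    Set.disjoint_sdiff_right
  rw [Set.union_sdiff_cancel hAB] at hsplit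
  linarith [m.nonneg (B \ A) (Set.sdiff_subset.trans hB)]

theorem μ_le_one {A : Set G} (hA : A ⊆ {g | g ≠ 1}) : m.μ A ≤ 1 :=
  m.total ▸ m.μ_mono subset_rfl hA

theorem μ_eq_one_of_subset {A B : Set G} (hB : B ⊆ {g | g ≠ 1}) (hAB : A ⊆ B)
    (hA : m.μ A = 1) : m.μ B = 1 :=
  le_antisymm (m.μ_le_one hB) (hA ▸ m.μ_mono hB hAB)

theorem μ_inter_eq_one {A B : Set G} (hA : A ⊆ {g | g ≠ 1}) (hB : B ⊆ {g | g ≠ 1})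
    (hA1 : m.μ A = 1) (hB1 : m.μ B = 1) : m.μ (A ∩ B) = 1 := by
  have hBA : B \ A ⊆ {g | g ≠ 1} := Set.sdiff_subset.trans hB
  have hunion := m.additive A (B \ A) hA hBA Set.disjoint_sdiff_right
  have hnull : m.μ (B \ A) = 0 :=
    le_antisymm (by linarith [m.μ_le_one (Set.union_subset hA hBA)]) (m.nonneg _ hBA)
  have hsplit := m.additive (A ∩ B) (B \ A) (Set.inter_subset_left.trans hA) hBA
    (Set.disjoint_sdiff_right.mono_left Set.inter_subset_left)
  rw [Set.inter_comm, Set.inter_union_sdiff] at hsplit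
  rw [Set.inter_comm]
  linarith

theorem mem_Nset_iff {g : G} :
    g ∈ Nset m ↔ m.μ ((centralizer {g} : Set G) \ {1}) = 1 := by
  refine ⟨?_, Or.inl⟩
  rintro (h | rfl)
  · exact h
  · rw [centralizer_singleton_one, coe_top, ← Set.compl_eq_univ_sdiff]
    exact m.total

theorem mul_mem_Nset {a b : G} (ha : a ∈ Nset m) (hb : b ∈ Nset m) : a * b ∈ Nset m := by
  rw [mem_Nset_iff] at ha hb ⊢
  refine m.μ_eq_one_of_subset (Set.sdiff_singleton_subset_ne) ?_
    (m.μ_inter_eq_one (Set.sdiff_singleton_subset_ne) (Set.sdiff_singleton_subset_ne) ha hb)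
  rintro x ⟨⟨hxa, hx1⟩, hxb, -⟩
  exact ⟨centralizer_singleton_inf_le_mul a b ⟨hxa, hxb⟩, hx1⟩

theorem inv_mem_Nset {a : G} (ha : a ∈ Nset m) : a⁻¹ ∈ Nset m := by
  rw [mem_Nset_iff] at ha ⊢
  exact m.μ_eq_one_of_subset (Set.sdiff_singleton_subset_ne)
    (Set.sdiff_subset_sdiff_left (centralizer_singleton_le_inv a)) ha

theorem conj_mem_Nset {a : G} (ha : a ∈ Nset m) (k : G) : k * a * k⁻¹ ∈ Nset m := by
  rw [mem_Nset_iff] at ha ⊢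
  refine m.μ_eq_one_of_subset (Set.sdiff_singleton_subset_ne) ?_
    ((m.conj_inv k _ (Set.sdiff_singleton_subset_ne)).trans ha)
  rintro _ ⟨x, ⟨hxa, hx1⟩, rfl⟩
  refine ⟨conj_mem_centralizer_singleton k hxa, fun hconj => hx1 ?_⟩
  simpa using hconj

def subgroupN : Subgroup G where
  carrier := Nset m
  one_mem' := Or.inr rfl
  mul_mem' := m.mul_mem_Nset
  inv_mem' := m.inv_mem_Nset

instance subgroupN_normal : m.subgroupN.Normal :=
  ⟨fun _ ha k => m.conj_mem_Nset ha k⟩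

end ConjInvMean

/-- `N = {g : μ(C_G(g) \ {1}) = 1} ∪ {1}` is a normal subgroup of `G`. -/
theorem stmt_1 {G : Type*} [Group G] (m : ConjInvMean G) :
    ∃ N : Subgroup G, N.Normal ∧ (N : Set G) = Nset m :=
  ⟨m.subgroupN, inferInstance, rfl⟩
end

section
/- Every infinite amenable group is inner amenable: if G is an infinite amenable group, then the conjugation action of G on G \ {1} admits an invariant mean. -/
open Filter Topology

/-- A left-translation-invariant finitely additive probability measure on `G`. -/
structure LeftInvMean (G : Type*) [Group G] where
  μ : Set G → ℝ
  nonneg : ∀ A : Set G, 0 ≤ μ A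
  total : μ Set.univ = 1
  additive : ∀ A B : Set G, Disjoint A B → μ (A ∪ B) = μ A + μ B
  left_inv : ∀ (g : G) (A : Set G), μ ((fun x => g * x) '' A) = μ A

/-!
Given a left-invariant mean `m`, put `ν(A) = ∫ m(A g) dm(g)`, the integral being the Choquet
integral `∫₀¹ m{g | m(A g) > t} dt`. Conjugating `A` by `h` turns `g ↦ m(A g)` into
`g ↦ m(A h⁻¹ g)`, which has the same integral by left invariance, and `ν(G ∖ {1}) = 1` because
singletons are `m`-null in an infinite group. Finite additivity of the Choquet integral comes from
comparing it with its Riemann sums `∑_{k ≤ n} m{⌈n u⌉ > k}`: these are integrals of `ℕ`-valued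
functions, hence additive up to the rounding error of `⌈·⌉`.
-/

theorem Nat.ceil_add_ceil_le {R : Type*} [Ring R] [LinearOrder R] [IsStrictOrderedRing R]
    [FloorRing R] {a b : R} (ha : 0 ≤ a) (hb : 0 ≤ b) : ⌈a⌉₊ + ⌈b⌉₊ ≤ ⌈a + b⌉₊ + 1 := by
  have := Int.ceil_add_ceil_le a b
  rw [← Int.natCast_ceil_eq_ceil ha, ← Int.natCast_ceil_eq_ceil hb,
    ← Int.natCast_ceil_eq_ceil (add_nonneg ha hb)] at this
  exact_mod_cast this

theorem eq_zero_of_forall_nat_mul_abs_le {K : Type*} [Field K] [LinearOrder K]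
    [IsStrictOrderedRing K] [Archimedean K] {x C : K}
    (h : ∀ n : ℕ, 0 < n → n * |x| ≤ C) : x = 0 := by
  by_contra hx
  have hpos : 0 < |x| := abs_pos.2 hx
  obtain ⟨n, hn⟩ := exists_nat_gt (C / |x|)
  have := h (n + 1) n.succ_pos
  push_cast at this
  linarith [(div_lt_iff₀ hpos).1 hn]

namespace LeftInvMean

variable {G : Type*} [Group G] (m : LeftInvMean G)

theorem μ_empty : m.μ ∅ = 0 := by
  simpa using m.additive ∅ ∅ (Set.disjoint_empty _)

theorem μ_mono {A B : Set G} (h : A ⊆ B) : m.μ A ≤ m.μ B := by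
  have := m.additive A (B \ A) disjoint_sdiff_self_right
  rw [Set.union_sdiff_cancel h] at this
  linarith [m.nonneg (B \ A)]

theorem μ_le_one (A : Set G) : m.μ A ≤ 1 :=
  m.total ▸ m.μ_mono (Set.subset_univ A)

theorem μ_compl (A : Set G) : m.μ Aᶜ = 1 - m.μ A := by
  have := m.additive A Aᶜ disjoint_compl_right
  rw [Set.union_compl_self, m.total] at this
  linarith

theorem μ_preimage_mul_left (g : G) (A : Set G) : m.μ ((g * ·) ⁻¹' A) = m.μ A := by
  rw [← inv_inv g, ← Set.image_mul_left, m.left_inv]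

theorem μ_biUnion_finset {ι : Type*} (s : Finset ι) (A : ι → Set G)
    (hA : Set.PairwiseDisjoint ↑s A) : m.μ (⋃ i ∈ s, A i) = ∑ i ∈ s, m.μ (A i) := by
  classical
  induction s using Finset.induction_on with
  | empty => simp [μ_empty]
  | insert a s ha ih =>
    rw [Finset.coe_insert, Set.pairwiseDisjoint_insert_of_notMem (by exact_mod_cast ha)] at hA
    have hdisj : Disjoint (A a) (⋃ i ∈ s, A i) :=
      Set.disjoint_iUnion₂_right.2 fun i hi => hA.2 i hi
    rw [Finset.set_biUnion_insert, m.additive _ _ hdisj, Finset.sum_insert ha, ih hA.1]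

theorem μ_singleton [Infinite G] (g : G) : m.μ {g} = 0 := by
  have hconst (x : G) : m.μ {x} = m.μ {1} := by
    rw [← m.μ_preimage_mul_left x, Set.preimage_mul_left_singleton, inv_mul_cancel]
  have hle (n : ℕ) : n * m.μ {1} ≤ 1 := by
    let e := Infinite.natEmbedding G
    have := m.μ_biUnion_finset (Finset.range n) (fun i => {e i})
      (fun i _ j _ hij => Set.disjoint_singleton.2 (e.injective.ne hij))
    simp only [hconst, Finset.sum_const, Finset.card_range, nsmul_eq_mul] at this
    exact this ▸ m.μ_le_one _
  rw [hconst]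
  by_contra hne
  have hpos := lt_of_le_of_ne (m.nonneg {1}) (Ne.symm hne)
  obtain ⟨n, hn⟩ := exists_nat_gt (1 / m.μ {1})
  linarith [hle n, (div_lt_iff₀ hpos).1 hn]

/-- Layer-cake formula: for `h ≤ N` this is the integral of `h` against `m`. -/
def layerSum (N : ℕ) (h : G → ℕ) : ℝ := ∑ k ∈ Finset.range N, m.μ {g | k < h g}

theorem layerSum_mono {N : ℕ} {h₁ h₂ : G → ℕ} (h : h₁ ≤ h₂) :
    m.layerSum N h₁ ≤ m.layerSum N h₂ :=
  Finset.sum_le_sum fun _ _ => m.μ_mono fun g hg => lt_of_lt_of_le hg (h g)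

theorem layerSum_add_indicator {N : ℕ} (h : G → ℕ) (E : Set G) (hE : ∀ g ∈ E, h g < N) :
    m.layerSum N (h + E.indicator 1) = m.layerSum N h + m.μ E := by
  have hlevel (k : ℕ) :
      {g | k < (h + E.indicator 1 : G → ℕ) g} = {g | k < h g} ∪ (E ∩ h ⁻¹' {k}) := by
    ext g
    by_cases hg : g ∈ E <;> simp [hg]
    omega
  have hdisj (k : ℕ) : Disjoint {g | k < h g} (E ∩ h ⁻¹' {k}) :=
    Set.disjoint_left.2 fun g hk hg => (ne_of_gt hk) hg.2
  have hcover : ⋃ k ∈ Finset.range N, E ∩ h ⁻¹' {k} = E := by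
    ext g
    simpa using fun hg => hE g hg
  simp only [layerSum, hlevel, m.additive _ _ (hdisj _), Finset.sum_add_distrib]
  rw [← m.μ_biUnion_finset _ (fun k => E ∩ h ⁻¹' {k}), hcover]
  exact fun i _ j _ hij => Set.disjoint_left.2 fun g hi hj => hij (hi.2.symm.trans hj.2)

theorem layerSum_add_one {N : ℕ} {h : G → ℕ} (hN : ∀ g, h g < N) :
    m.layerSum N (h + 1) = m.layerSum N h + 1 := by
  simpa [m.total] using m.layerSum_add_indicator h Set.univ fun g _ => hN g

theorem layerSum_add {N : ℕ} {h₁ h₂ : G → ℕ} (hN : ∀ g, h₁ g + h₂ g ≤ N) :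
    m.layerSum N (h₁ + h₂) = m.layerSum N h₁ + m.layerSum N h₂ := by
  suffices ∀ K : ℕ, ∀ h₂ : G → ℕ, (∀ g, h₂ g ≤ K) → (∀ g, h₁ g + h₂ g ≤ N) →
      m.layerSum N (h₁ + h₂) = m.layerSum N h₁ + m.layerSum N h₂ from
    this N h₂ (fun g => le_of_add_le_right (hN g)) hN
  intro K
  induction K with
  | zero =>
    intro h₂ hK _
    obtain rfl : h₂ = 0 := funext fun g => Nat.le_zero.1 (hK g)
    simp [layerSum, μ_empty]
  | succ K ih =>
    intro h₂ hK hN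
    -- peel off the bottom layer `{h₂ > 0}` of `h₂`
    set E := {g | 0 < h₂ g}
    have hsplit : h₂ = (h₂ - 1) + E.indicator 1 := by
      ext g
      by_cases hg : 0 < h₂ g <;> simp [E, hg] <;> omega
    have hlt : ∀ g ∈ E, h₁ g + (h₂ g - 1) < N := fun g (hg : 0 < h₂ g) => by
      have := hN g; omega
    calc m.layerSum N (h₁ + h₂) = m.layerSum N (h₁ + (h₂ - 1) + E.indicator 1) := by
          rw [add_assoc, ← hsplit]
      _ = m.layerSum N h₁ + (m.layerSum N (h₂ - 1) + m.μ E) := by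
          rw [m.layerSum_add_indicator (h₁ + (h₂ - 1)) E hlt, ← add_assoc,
            ih (h₂ - 1) (fun g => Nat.sub_le_iff_le_add.2 (hK g))
              (fun g => (Nat.add_le_add_left (Nat.sub_le _ _) _).trans (hN g))]
      _ = m.layerSum N h₁ + m.layerSum N h₂ := by
          rw [← m.layerSum_add_indicator (h₂ - 1) E
            fun g hg => (Nat.le_add_left _ _).trans_lt (hlt g hg), ← hsplit]

/-- For `u` with values in `[0, 1]` this is the integral of `u` against `m`. -/
noncomputable def choquetIntegral (u : G → ℝ) : ℝ := ∫ t in (0 : ℝ)..1, m.μ {g | t < u g}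

theorem antitone_μ_setOf_lt (u : G → ℝ) : Antitone fun t : ℝ => m.μ {g | t < u g} :=
  fun _ _ hst => m.μ_mono fun _ hg => lt_of_le_of_lt hst hg

theorem choquetIntegral_nonneg (u : G → ℝ) : 0 ≤ m.choquetIntegral u :=
  intervalIntegral.integral_nonneg zero_le_one fun _ _ => m.nonneg _

theorem choquetIntegral_one : m.choquetIntegral 1 = 1 := by
  have hae : ∀ᵐ t ∂MeasureTheory.volume, t ∈ Set.uIoc (0 : ℝ) 1 →
      m.μ {g : G | t < (1 : G → ℝ) g} = (fun _ => 1) t := by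
    filter_upwards [MeasureTheory.volume.ae_ne 1] with t ht1 ht
    have ht : t < 1 := lt_of_le_of_ne (Set.uIoc_of_le (zero_le_one' ℝ) ▸ ht).2 ht1
    simpa [ht] using m.total
  rw [choquetIntegral, intervalIntegral.integral_congr_ae hae]
  simp

theorem choquetIntegral_comp_mul_left (u : G → ℝ) (h : G) :
    m.choquetIntegral (fun g => u (h * g)) = m.choquetIntegral u := by
  unfold choquetIntegral
  congr 1
  funext t
  exact m.μ_preimage_mul_left h {g | t < u g}

/-- `layerSum (n + 1) ⌈n u⌉₊` is the upper Riemann sum of the antitone `t ↦ m{u > t}` on the grid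
`k / n`. -/
theorem mul_choquetIntegral_mem_Icc (u : G → ℝ) {n : ℕ} (hn : 0 < n) :
    n * m.choquetIntegral u ∈ Set.Icc (m.layerSum (n + 1) (fun g => ⌈n * u g⌉₊) - 1)
      (m.layerSum (n + 1) (fun g => ⌈n * u g⌉₊)) := by
  have hn' : (0 : ℝ) < n := Nat.cast_pos.2 hn
  set f : ℝ → ℝ := fun s => m.μ {g | s / n < u g}
  have hf : Antitone f :=
    (m.antitone_μ_setOf_lt u).comp_monotone fun _ _ h => div_le_div_of_nonneg_right h hn'.le
  have hint : ∫ s in (0 : ℝ)..n, f s = n * m.choquetIntegral u := by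
    rw [intervalIntegral.integral_comp_div (fun t => m.μ {g | t < u g}) hn'.ne', zero_div,
      div_self hn'.ne', smul_eq_mul, choquetIntegral]
  have hsum : m.layerSum (n + 1) (fun g => ⌈n * u g⌉₊) = ∑ k ∈ Finset.range (n + 1), f k := by
    refine Finset.sum_congr rfl fun k _ => congrArg m.μ (Set.ext fun g => ?_)
    simp [Nat.lt_ceil, div_lt_iff₀ hn', mul_comm]
  have hlower := (hf.antitoneOn (Set.Icc 0 (0 + n))).sum_le_integral
  have hupper := (hf.antitoneOn (Set.Icc 0 (0 + n))).integral_le_sum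
  simp only [zero_add, Nat.cast_add, Nat.cast_one] at hlower hupper
  rw [hint] at hlower hupper
  have hfirst := Finset.sum_range_succ' (fun k : ℕ => f k) n
  have hlast := Finset.sum_range_succ (fun k : ℕ => f k) n
  push_cast at hfirst
  have h0 : f 0 ≤ 1 := m.μ_le_one _
  have hn0 : 0 ≤ f n := m.nonneg _
  constructor <;> linarith

theorem choquetIntegral_add {u v : G → ℝ} (hu : ∀ g, 0 ≤ u g) (hv : ∀ g, 0 ≤ v g)
    (huv : ∀ g, u g + v g ≤ 1) :
    m.choquetIntegral (u + v) = m.choquetIntegral u + m.choquetIntegral v := by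
  rw [← sub_eq_zero, sub_add_eq_sub_sub]
  refine eq_zero_of_forall_nat_mul_abs_le (C := 2) fun n hn => ?_
  set a : G → ℕ := fun g => ⌈n * u g⌉₊
  set b : G → ℕ := fun g => ⌈n * v g⌉₊
  set c : G → ℕ := fun g => ⌈n * (u + v) g⌉₊
  have hca : c ≤ a + b := fun g => by
    simpa only [c, Pi.add_apply, mul_add] using Nat.ceil_add_le _ _
  have hab : a + b ≤ c + 1 := fun g => by
    simpa only [a, b, c, Pi.add_apply, Pi.one_apply, mul_add] using
      Nat.ceil_add_ceil_le (mul_nonneg n.cast_nonneg (hu g)) (mul_nonneg n.cast_nonneg (hv g))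
  have hc : ∀ g, c g < n + 1 := fun g => Nat.lt_succ_of_le <| Nat.ceil_le.2 <| by
    simpa using mul_le_of_le_one_right n.cast_nonneg (huv g)
  have hadd := m.layerSum_add (N := n + 1) fun g => (hab g).trans (hc g)
  have hlower := m.layerSum_mono (N := n + 1) hca
  have hupper := (m.layerSum_mono (N := n + 1) hab).trans_eq (m.layerSum_add_one hc)
  obtain ⟨hu₁, hu₂⟩ := m.mul_choquetIntegral_mem_Icc u hn
  obtain ⟨hv₁, hv₂⟩ := m.mul_choquetIntegral_mem_Icc v hn
  obtain ⟨huv₁, huv₂⟩ := m.mul_choquetIntegral_mem_Icc (u + v) hn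
  rw [← Nat.abs_cast n, ← abs_mul, abs_le, mul_sub, mul_sub]
  constructor <;> linarith

/-- `m.translateRight A g = m(A g)`, the mass of the right translate `A g`. -/
def translateRight (A : Set G) (g : G) : ℝ := m.μ ((· * g⁻¹) ⁻¹' A)

theorem translateRight_nonneg (A : Set G) (g : G) : 0 ≤ m.translateRight A g :=
  m.nonneg _

theorem translateRight_union {A B : Set G} (hAB : Disjoint A B) :
    m.translateRight (A ∪ B) = m.translateRight A + m.translateRight B :=
  funext fun _ => m.additive _ _ (hAB.preimage _)

theorem translateRight_conj (h : G) (A : Set G) :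
    m.translateRight ((fun x => h * x * h⁻¹) '' A) = fun g => m.translateRight A (h⁻¹ * g) := by
  funext g
  rw [translateRight, translateRight, Set.image_eq_preimage_of_inverse
    (f := fun x => h * x * h⁻¹) (g := fun x => h⁻¹ * x * h) (fun x => by group) (fun x => by group)]
  conv_rhs => rw [← m.μ_preimage_mul_left h⁻¹]
  congr 1
  ext x
  simp only [Set.mem_preimage]
  rw [show h⁻¹ * (x * g⁻¹) * h = h⁻¹ * x * (h⁻¹ * g)⁻¹ by group]

theorem translateRight_compl_one [Infinite G] : m.translateRight {x | x ≠ 1} = 1 := by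
  funext g
  have hset : (· * g⁻¹) ⁻¹' {x : G | x ≠ 1} = {g}ᶜ := by
    ext x
    simp [mul_inv_eq_one]
  rw [translateRight, hset, μ_compl, μ_singleton, sub_zero, Pi.one_apply]

noncomputable def toConjInvMean [Infinite G] : ConjInvMean G where
  μ A := m.choquetIntegral (m.translateRight A)
  nonneg A _ := m.choquetIntegral_nonneg _
  total := by rw [translateRight_compl_one, choquetIntegral_one]
  additive A B _ _ hAB := by
    rw [m.translateRight_union hAB]
    refine m.choquetIntegral_add (m.translateRight_nonneg A) (m.translateRight_nonneg B)
      fun g => ?_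
    rw [← Pi.add_apply (m.translateRight A), ← m.translateRight_union hAB]
    exact m.μ_le_one _
  conj_inv h A _ := by rw [translateRight_conj, choquetIntegral_comp_mul_left]

end LeftInvMean

/-- Every infinite amenable group is inner amenable. -/
theorem stmt_8 {G : Type*} [Group G] (hinf : Infinite G)
    (ham : Nonempty (LeftInvMean G)) :
    Nonempty (ConjInvMean G) :=
  ham.map fun m => m.toConjInvMean
end

section
/- Let G be a group and μ a finitely additive conjugation-invariant probability measure on G \ {1}, and let N = {g : μ(C_G(g) \ {1}) = 1} ∪ {1}. If G is icc and N ≠ {1}, then the centralizer in G of every finite subset of N is infinite. -/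
/-!
Every centralizer `C_G(h) \ {1}`, `h ∈ N`, has measure one, hence so does the intersection over
a finite `F ⊆ N`. In an icc group no finite set `A` has measure one: only finitely many sets
`A ∩ kAk⁻¹` occur, so the intersection of all conjugates of `A` still has measure one, and any
element of it has its whole (infinite) conjugacy class inside `A`.
-/

open Filter Topology

lemma conj_image_subset_ne_one {G : Type*} [Group G] {A : Set G} (hA : A ⊆ {g : G | g ≠ 1})
    (k : G) : (fun x => k * x * k⁻¹) '' A ⊆ {g : G | g ≠ 1} := by
  rintro _ ⟨a, ha, rfl⟩
  simpa using hA ha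

namespace ConjInvMean

variable {G : Type*} [Group G] (m : ConjInvMean G)

lemma measure_empty : m.μ ∅ = 0 := by
  have h := m.additive ∅ ∅ (by simp) (by simp) (by simp)
  simp only [Set.union_empty] at h
  linarith

lemma measure_add_measure_sdiff {A B : Set G} (hB : B ⊆ {g : G | g ≠ 1}) (hAB : A ⊆ B) :
    m.μ A + m.μ (B \ A) = m.μ B := by
  rw [← m.additive _ _ (hAB.trans hB) (Set.sdiff_subset.trans hB) disjoint_sdiff_self_right,
    Set.union_sdiff_cancel hAB]

lemma measure_le_one {A : Set G} (hA : A ⊆ {g : G | g ≠ 1}) : m.μ A ≤ 1 := by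
  have := m.measure_add_measure_sdiff subset_rfl hA
  have := m.nonneg ({g : G | g ≠ 1} \ A) Set.sdiff_subset
  linarith [m.total]

lemma measure_inter_eq_one {A B : Set G} (hA : A ⊆ {g : G | g ≠ 1})
    (hB : B ⊆ {g : G | g ≠ 1}) (hA1 : m.μ A = 1) (hB1 : m.μ B = 1) : m.μ (A ∩ B) = 1 := by
  have hsplit := m.measure_add_measure_sdiff hA (Set.inter_subset_left (t := B))
  rw [Set.sdiff_self_inter] at hsplit
  have hunion := m.additive B (A \ B) hB (Set.sdiff_subset.trans hA) disjoint_sdiff_self_right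
  have : m.μ (B ∪ A \ B) ≤ 1 :=
    m.measure_le_one (Set.union_subset hB (Set.sdiff_subset.trans hA))
  have : m.μ (A ∩ B) ≤ 1 := m.measure_le_one (Set.inter_subset_left.trans hA)
  linarith

lemma measure_inter_biInter_eq_one {ι : Type*} (s : Finset ι) {A : ι → Set G}
    (hA : ∀ i ∈ s, m.μ ({g : G | g ≠ 1} ∩ A i) = 1) :
    m.μ ({g : G | g ≠ 1} ∩ ⋂ i ∈ s, A i) = 1 := by
  classical
  induction s using Finset.induction_on with
  | empty => simpa using m.total
  | insert a s _ ih =>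
    rw [Finset.set_biInter_insert, Set.inter_inter_distrib_left]
    exact m.measure_inter_eq_one Set.inter_subset_left Set.inter_subset_left
      (hA a (Finset.mem_insert_self a s))
      (ih fun i hi => hA i (Finset.mem_insert_of_mem hi))

lemma infinite_of_measure_eq_one
    (hicc : ∀ g : G, g ≠ 1 → {x : G | ∃ h : G, h * g * h⁻¹ = x}.Infinite)
    {A : Set G} (hA : A ⊆ {g : G | g ≠ 1}) (hA1 : m.μ A = 1) : A.Infinite := by
  intro hfin
  set S := Set.range fun k : G => A ∩ (fun x => k * x * k⁻¹) '' A
  have hS : S.Finite :=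
    hfin.finite_subsets.subset (Set.range_subset_iff.2 fun _ => Set.inter_subset_left)
  have hT : m.μ ({g : G | g ≠ 1} ∩ ⋂ B ∈ hS.toFinset, B) = 1 := by
    refine m.measure_inter_biInter_eq_one _ fun B hB => ?_
    obtain ⟨k, rfl⟩ := hS.mem_toFinset.1 hB
    rw [Set.inter_eq_right.2 (Set.inter_subset_left.trans hA)]
    exact m.measure_inter_eq_one hA (conj_image_subset_ne_one hA k) hA1
      ((m.conj_inv k A hA).trans hA1)
  obtain ⟨c, hc1, hcT⟩ : ({g : G | g ≠ 1} ∩ ⋂ B ∈ hS.toFinset, B).Nonempty := by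
    by_contra hempty
    rw [Set.not_nonempty_iff_eq_empty.1 hempty, measure_empty] at hT
    exact zero_ne_one hT
  have hclass : {x : G | ∃ h : G, h * c * h⁻¹ = x} ⊆ A := by
    rintro _ ⟨h, rfl⟩
    obtain ⟨-, a, ha, rfl⟩ := Set.mem_iInter₂.1 hcT _ (hS.mem_toFinset.2 ⟨h⁻¹, rfl⟩)
    simpa [mul_assoc] using ha
  exact hicc c hc1 (hfin.subset hclass)

lemma measure_inter_centralizer_of_mem_Nset {a : G} (ha : a ∈ Nset m) :
    m.μ ({g : G | g ≠ 1} ∩ Subgroup.centralizer {a}) = 1 := by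
  rcases ha with ha | rfl
  · rwa [Set.inter_comm, ← Set.compl_singleton_eq, ← Set.sdiff_eq]
  · rw [Set.inter_eq_left.2 fun g _ => Subgroup.mem_centralizer_singleton_iff.2 (by simp)]
    exact m.total

end ConjInvMean

theorem stmt_10_general {G : Type*} [Group G] (m : ConjInvMean G)
    (hicc : ∀ g : G, g ≠ 1 → {x : G | ∃ h : G, h * g * h⁻¹ = x}.Infinite)
    (F : Finset G) (hFN : (F : Set G) ⊆ Nset m) :
    {g : G | ∀ h ∈ F, g * h = h * g}.Infinite := by
  have hcentralizers : m.μ ({g : G | g ≠ 1} ∩ ⋂ h ∈ F, Subgroup.centralizer {h}) = 1 :=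
    m.measure_inter_biInter_eq_one F fun h hh =>
      m.measure_inter_centralizer_of_mem_Nset (hFN hh)
  refine (m.infinite_of_measure_eq_one hicc Set.inter_subset_left hcentralizers).mono ?_
  rintro g ⟨-, hg⟩
  exact fun h hh => Subgroup.mem_centralizer_singleton_iff.1 (Set.mem_iInter₂.1 hg h hh)

/-- If `G` is icc and `N ≠ {1}`, the centralizer of every finite subset of
`N` is infinite. -/
theorem stmt_10 {G : Type*} [Group G] (m : ConjInvMean G)
    (hicc : ∀ g : G, g ≠ 1 → {x : G | ∃ h : G, h * g * h⁻¹ = x}.Infinite)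
    (hN : Nset m ≠ {1}) (F : Finset G) (hFN : (F : Set G) ⊆ Nset m) :
    {g : G | ∀ h ∈ F, g * h = h * g}.Infinite :=
  stmt_10_general m hicc F hFN
end
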